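/- Let p : ℝⁿ → [1,∞) be locally log-Hölder continuous with constant C and with p⁺ := sup p < ∞, and let m > 0. Then there exists c > 0 depending only on m, C and p⁺ such that for every cube Q ⊂ ℝⁿ with side length ℓ(Q) ≤ 1, every a with |Q|^m ≤ a ≤ |Q|^{−m}, every point y ∈ Q at which p attains its infimum over Q (i.e. p(y) = inf_Q p), every x ∈ Q, and every t ≥ 0, one has φ_a(y, t) ≤ c φ_a(x, t). -/

import Mathlib

open MeasureTheory Set

noncomputable section

/-- The axis-parallel cube in `ℝⁿ` with lower corner `z` and side length `ℓ`. -/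
def cube (n : ℕ) (z : Fin n → ℝ) (ℓ : ℝ) : Set (Fin n → ℝ) :=
  Set.Icc z (fun i => z i + ℓ)

/-- `p` is locally log-Hölder continuous with constant `C`. -/
def LogHolder (n : ℕ) (C : ℝ) (p : (Fin n → ℝ) → ℝ) : Prop :=
  ∀ x y : Fin n → ℝ, x ≠ y →
    |p x - p y| ≤ C / Real.log (Real.exp 1 + 1 / ‖x - y‖)

/-- The shifted function `φ_a(x,t) = ∫₀ᵗ p(x) (a+τ)^(p(x)-2) τ dτ` associated to
`φ(x,t) = t^(p x)`. -/
def phiShift (n : ℕ) (p : (Fin n → ℝ) → ℝ) (a : ℝ) (x : Fin n → ℝ) (t : ℝ) : ℝ :=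
  ∫ τ in (0:ℝ)..t, p x * (a + τ) ^ (p x - 2) * τ

/-!
On a cube `Q` of side `ℓ ≤ 1` the log-Hölder condition gives `(p x - p y) · log (1/ℓ) ≤ |C|`,
and `a ≥ |Q|^m = ℓ^(n m)` gives `log (1/a) ≤ n m log (1/ℓ)`. Since `p y ≤ p x` and every
`s ≥ a`, the integrands of `φ_a(y, ·)` and `φ_a(x, ·)` then compare pointwise through
`s^(p y - p x) = exp ((p x - p y) log (1/s)) ≤ exp (n m |C|)`.
-/

lemma volume_cube_toReal (n : ℕ) (z : Fin n → ℝ) {ℓ : ℝ} (hℓ : 0 ≤ ℓ) :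
    (volume (cube n z ℓ)).toReal = ℓ ^ n := by
  rw [cube, Real.volume_Icc_pi_toReal fun i => le_add_of_nonneg_right hℓ]
  simp

lemma norm_sub_le_of_mem_cube {n : ℕ} {z x y : Fin n → ℝ} {ℓ : ℝ} (hℓ : 0 ≤ ℓ)
    (hx : x ∈ cube n z ℓ) (hy : y ∈ cube n z ℓ) : ‖x - y‖ ≤ ℓ := by
  refine (pi_norm_le_iff_of_nonneg hℓ).2 fun i => ?_
  rw [Pi.sub_apply, Real.norm_eq_abs, abs_le]
  constructor <;> linarith [hx.1 i, hx.2 i, hy.1 i, hy.2 i]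

lemma LogHolder.abs_sub_mul_neg_log_le {n : ℕ} {C : ℝ} {p : (Fin n → ℝ) → ℝ}
    (hp : LogHolder n C p) {x y : Fin n → ℝ} {r : ℝ} (hr : 0 < r) (hxy : ‖x - y‖ ≤ r) :
    |p x - p y| * -Real.log r ≤ |C| := by
  rcases eq_or_ne x y with rfl | hne
  · simp
  set L := Real.log (Real.exp 1 + 1 / ‖x - y‖)
  have hd : 0 < ‖x - y‖ := norm_sub_pos_iff.2 hne
  have hL : 1 ≤ L := by
    rw [← Real.log_exp 1]
    exact Real.log_le_log (Real.exp_pos 1) (le_add_of_nonneg_right (by positivity))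
  have hrL : -Real.log r ≤ L := by
    rw [← Real.log_inv]
    refine Real.log_le_log (inv_pos.2 hr) ?_
    calc r⁻¹ ≤ ‖x - y‖⁻¹ := inv_anti₀ hd hxy
      _ ≤ Real.exp 1 + 1 / ‖x - y‖ := by
          rw [one_div]
          exact le_add_of_nonneg_left (Real.exp_pos 1).le
  calc |p x - p y| * -Real.log r ≤ |p x - p y| * L := by gcongr
    _ ≤ (|C| / L) * L := by
        gcongr
        exact (hp x y hne).trans (div_le_div_of_nonneg_right (le_abs_self C) (by linarith))
    _ = |C| := div_mul_cancel₀ _ (by linarith)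

lemma rpow_le_exp_mul_rpow {a s q q' K : ℝ} (ha : 0 < a) (has : a ≤ s) (hqq' : q ≤ q')
    (hK : (q' - q) * -Real.log a ≤ K) : s ^ q ≤ Real.exp K * s ^ q' := by
  have hs : 0 < s := ha.trans_le has
  have hexp : s ^ (q - q') ≤ Real.exp K := by
    rw [Real.rpow_def_of_pos hs, Real.exp_le_exp]
    calc Real.log s * (q - q') = (q' - q) * -Real.log s := by ring
      _ ≤ (q' - q) * -Real.log a :=
          mul_le_mul_of_nonneg_left (neg_le_neg (Real.log_le_log ha has)) (by linarith)
      _ ≤ K := hK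
  calc s ^ q = s ^ (q - q') * s ^ q' := by rw [← Real.rpow_add hs]; ring_nf
    _ ≤ Real.exp K * s ^ q' := mul_le_mul_of_nonneg_right hexp (by positivity)

lemma intervalIntegrable_phiShift_integrand {q a t : ℝ} (ha : 0 < a) (ht : 0 ≤ t) :
    IntervalIntegrable (fun τ => q * (a + τ) ^ (q - 2) * τ) volume 0 t := by
  refine ContinuousOn.intervalIntegrable fun τ hτ => ?_
  rw [uIcc_of_le ht] at hτ
  have : a + τ ≠ 0 := by linarith [hτ.1]
  exact ContinuousAt.continuousWithinAt (by fun_prop (disch := exact Or.inl this))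

lemma phiShift_le_exp_mul_phiShift {n : ℕ} {p : (Fin n → ℝ) → ℝ} {a t K : ℝ}
    {x y : Fin n → ℝ} (ha : 0 < a) (ht : 0 ≤ t) (hpy : 0 ≤ p y) (hyx : p y ≤ p x)
    (hK : (p x - p y) * -Real.log a ≤ K) :
    phiShift n p a y t ≤ Real.exp K * phiShift n p a x t := by
  rw [phiShift, phiShift, ← intervalIntegral.integral_const_mul]
  refine intervalIntegral.integral_mono_on ht (intervalIntegrable_phiShift_integrand ha ht)
    ((intervalIntegrable_phiShift_integrand ha ht).const_mul _) fun τ hτ => ?_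
  have hpow : (a + τ) ^ (p y - 2) ≤ Real.exp K * (a + τ) ^ (p x - 2) :=
    rpow_le_exp_mul_rpow ha (by linarith [hτ.1]) (by linarith) (by rwa [sub_sub_sub_cancel_right])
  have hτ0 : 0 ≤ τ := hτ.1
  calc p y * (a + τ) ^ (p y - 2) * τ ≤ p x * (Real.exp K * (a + τ) ^ (p x - 2)) * τ := by
        gcongr
        linarith
    _ = Real.exp K * (p x * (a + τ) ^ (p x - 2) * τ) := by ring

/-- If `p : ℝⁿ → [1,∞)` is locally log-Hölder continuous with constant `C` and bounded by
`p⁺`, and `m > 0`, then there is `c = c(m, C, p⁺) > 0` such that for every cube `Q` with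
`ℓ(Q) ≤ 1`, every `a` with `|Q|^m ≤ a ≤ |Q|^{-m}`, every `y ∈ Q` at which `p` attains its
infimum over `Q`, every `x ∈ Q` and every `t ≥ 0` one has `φ_a(y,t) ≤ c φ_a(x,t)`. -/
theorem phiShift_at_min_le (n : ℕ) (C pplus m : ℝ) (hm : 0 < m) :
    ∃ c : ℝ, 0 < c ∧
      ∀ p : (Fin n → ℝ) → ℝ,
        (∀ x, 1 ≤ p x) → (∀ x, p x ≤ pplus) → LogHolder n C p →
        ∀ (z : Fin n → ℝ) (ℓ : ℝ), 0 < ℓ → ℓ ≤ 1 →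
          ∀ a : ℝ, (volume (cube n z ℓ)).toReal ^ m ≤ a →
            a ≤ (volume (cube n z ℓ)).toReal ^ (-m) →
            ∀ y ∈ cube n z ℓ, (∀ x' ∈ cube n z ℓ, p y ≤ p x') →
              ∀ x ∈ cube n z ℓ, ∀ t : ℝ, 0 ≤ t →
                phiShift n p a y t ≤ c * phiShift n p a x t := by
  refine ⟨Real.exp (n * m * |C|), Real.exp_pos _, ?_⟩
  intro p hp1 _ hlog z ℓ hℓ0 _ a ha _ y hy hymin x hx t ht
  rw [volume_cube_toReal n z hℓ0.le] at ha
  have hvol : 0 < (ℓ ^ n) ^ m := by positivity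
  have ha0 : 0 < a := hvol.trans_le ha
  have hyx : p y ≤ p x := hymin x hx
  have hlog_a : -Real.log a ≤ n * m * -Real.log ℓ := by
    have := Real.log_le_log hvol ha
    rw [Real.log_rpow (by positivity), Real.log_pow] at this
    linarith
  have hosc : (p x - p y) * -Real.log ℓ ≤ |C| := by
    simpa [abs_of_nonneg (sub_nonneg.2 hyx)] using
      hlog.abs_sub_mul_neg_log_le hℓ0 (norm_sub_le_of_mem_cube hℓ0.le hx hy)
  refine phiShift_le_exp_mul_phiShift ha0 ht (by linarith [hp1 y]) hyx ?_
  calc (p x - p y) * -Real.log a ≤ (p x - p y) * (n * m * -Real.log ℓ) :=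
        mul_le_mul_of_nonneg_left hlog_a (by linarith)
    _ = n * m * ((p x - p y) * -Real.log ℓ) := by ring
    _ ≤ n * m * |C| := mul_le_mul_of_nonneg_left hosc (by positivity)
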